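/- arXiv:1309.4935 — 5 statements merged into one kernel-verified Lean document; each statement's English description precedes it below -/
import Mathlib

section
/- Let T > 0, let k : [0,T] → ℝ^d be càdlàg, and let D be a dense subset of [0,T] with 0 ∈ D and T ∈ D. Let k^n : [0,T] → ℝ^d, n ∈ ℕ, satisfy k^n(t) → k(t) as n → ∞ for every t ∈ D. Then ↕k↕_T ≤ liminf_{n → ∞} ↕k^n↕_T, where the total variations are taken in [0,∞]. -/
/-!
At a partition point `t` of `[0,T]`, right-continuity lets us move `t` slightly to the right into
`D` without changing `k t` by much. Done uniformly on a grid of mesh `δ`, this gives monotone maps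
`g : [0,T] → D` with `t ≤ g t < t + δ`; thus `k ∘ g` has variation at most that of `k` on `D`,
and `k ∘ g → k` pointwise as `δ → 0`. Lower semicontinuity of the variation under pointwise
convergence then gives `↕k↕_[0,T] ≤ ↕k↕_D ≤ liminf ↕kⁿ↕_D ≤ liminf ↕kⁿ↕_[0,T]`.
-/

open Filter Topology

/-- A function `x : ℝ → E` is càdlàg on `[0,T]` if it is right-continuous at every
point of `[0,T)` and has a left limit at every point of `(0,T]`. -/
def Cadlag {E : Type*} [TopologicalSpace E] (T : ℝ) (x : ℝ → E) : Prop :=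
  (∀ t ∈ Set.Ico (0 : ℝ) T, Tendsto x (nhdsWithin t (Set.Ioc t T)) (nhds (x t))) ∧
  (∀ t ∈ Set.Ioc (0 : ℝ) T, ∃ L, Tendsto x (nhdsWithin t (Set.Ico 0 t)) (nhds L))

open Set

theorem eVariationOn_le_liminf_of_tendsto {α E ι : Type*} [LinearOrder α] [PseudoEMetricSpace E]
    {F : ι → α → E} {p : Filter ι} {f : α → E} {s : Set α}
    (hF : ∀ x ∈ s, Tendsto (fun i => F i x) p (𝓝 (f x))) :
    eVariationOn f s ≤ liminf (fun i => eVariationOn (F i) s) p :=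
  le_of_forall_lt_imp_le_of_dense fun _ hv =>
    le_liminf_of_le (h := (eVariationOn.lowerSemicontinuous_aux hF hv).mono fun _ => le_of_lt)

theorem Cadlag.continuousWithinAt_Icc {E : Type*} [TopologicalSpace E] {T t : ℝ} {x : ℝ → E}
    (hx : Cadlag T x) (ht : t ∈ Icc 0 T) : ContinuousWithinAt x (Icc t T) t := by
  rcases ht.2.lt_or_eq with htT | rfl
  · rw [← Ioc_insert_left ht.2, continuousWithinAt_insert_self]
    exact hx.1 t ⟨ht.1, htT⟩
  · rw [Icc_self]
    exact continuousWithinAt_singleton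

theorem exists_mem_Icc_min_of_subset_closure {D : Set ℝ} {a b p q : ℝ}
    (hD : Icc a b ⊆ closure D) (hb : b ∈ D) (hap : a ≤ p) (hpq : p < q) :
    ∃ y ∈ D, y ∈ Icc (min b p) (min b q) := by
  rcases le_or_gt b p with hbp | hpb
  · exact ⟨b, hb, by simp [hbp, hbp.trans hpq.le]⟩
  have hp : p < min b q := lt_min hpb hpq
  have hmid : (p + min b q) / 2 ∈ closure D := hD ⟨by linarith, by linarith [min_le_left b q]⟩
  obtain ⟨y, hy, hyD⟩ := mem_closure_iff.1 hmid (Ioo p (min b q)) isOpen_Ioo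
    ⟨by linarith, by linarith⟩
  exact ⟨y, hyD, (min_le_right b p).trans hy.1.le, hy.2.le⟩

theorem exists_monotone_mapsTo_near_right {D : Set ℝ} {a b δ : ℝ} (hD : Icc a b ⊆ closure D)
    (hb : b ∈ D) (hδ : 0 < δ) :
    ∃ g : ℝ → ℝ, Monotone g ∧ MapsTo g (Icc a b) D ∧
      ∀ x ∈ Icc a b, g x ∈ Icc x b ∧ g x < x + δ := by
  set h := δ / 2 with hh_def
  have hh : 0 < h := half_pos hδ
  -- `c j` lies in the `j`-th cell of the grid of mesh `h` (clipped at `b`), and `x` is sent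
  -- to the first cell starting at or after `x`.
  choose c hcD hc using fun j : ℕ =>
    exists_mem_Icc_min_of_subset_closure hD hb (p := a + j * h) (q := a + (j + 1) * h)
      (le_add_of_nonneg_right (by positivity)) (by linarith)
  have hc_mono : Monotone c := monotone_nat_of_le_succ fun j =>
    (hc j).2.trans (by exact_mod_cast (hc (j + 1)).1)
  refine ⟨fun x => c ⌈(x - a) / h⌉₊,
    hc_mono.comp fun x y hxy => Nat.ceil_mono (by gcongr),
    fun x _ => hcD _, fun x hx => ?_⟩
  set j := ⌈(x - a) / h⌉₊
  have hxj : x ≤ a + j * h := by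
    have := Nat.le_ceil ((x - a) / h)
    rw [div_le_iff₀ hh] at this
    linarith
  have hjx : a + j * h < x + h := by
    have := Nat.ceil_lt_add_one (div_nonneg (sub_nonneg.2 hx.1) hh.le)
    rw [← sub_lt_iff_lt_add, lt_div_iff₀ hh, sub_mul, one_mul] at this
    linarith
  obtain ⟨hlo, hhi⟩ := hc j
  refine ⟨⟨(le_min hx.2 hxj).trans hlo, hhi.trans (min_le_left _ _)⟩, ?_⟩
  linarith [hhi.trans (min_le_right _ _), hh_def]

theorem eVariationOn_Icc_le_of_subset_closure {E : Type*} [PseudoEMetricSpace E] {f : ℝ → E}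
    {D : Set ℝ} {a b : ℝ} (hf : ∀ x ∈ Icc a b, ContinuousWithinAt f (Icc x b) x)
    (hD : Icc a b ⊆ closure D) (hb : b ∈ D) :
    eVariationOn f (Icc a b) ≤ eVariationOn f D := by
  choose g hg_mono hg_maps hg_near using fun n : ℕ =>
    exists_monotone_mapsTo_near_right hD hb (Nat.one_div_pos_of_nat (n := n))
  have hg_tendsto : ∀ x ∈ Icc a b, Tendsto (fun n => g n x) atTop (𝓝[Icc x b] x) := by
    intro x hx
    refine tendsto_nhdsWithin_iff.2 ⟨?_, Eventually.of_forall fun n => (hg_near n x hx).1⟩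
    refine tendsto_of_tendsto_of_tendsto_of_le_of_le tendsto_const_nhds ?_
      (fun n => (hg_near n x hx).1.1) (fun n => (hg_near n x hx).2.le)
    simpa using tendsto_one_div_add_atTop_nhds_zero_nat.const_add x
  calc eVariationOn f (Icc a b)
      ≤ liminf (fun n => eVariationOn (f ∘ g n) (Icc a b)) atTop :=
        eVariationOn_le_liminf_of_tendsto fun x hx => (hf x hx).tendsto.comp (hg_tendsto x hx)
    _ ≤ eVariationOn f D := liminf_le_of_frequently_le' <| Frequently.of_forall fun n =>
        eVariationOn.comp_le_of_monotoneOn f (g n) ((hg_mono n).monotoneOn _) (hg_maps n)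

theorem eVariationOn_le_liminf_of_pointwise_on_dense_general {d : ℕ} (T : ℝ)
    (k : ℝ → EuclideanSpace ℝ (Fin d)) (hk : Cadlag T k)
    (D : Set ℝ) (hDsub : D ⊆ Set.Icc 0 T) (hDdense : Set.Icc (0 : ℝ) T ⊆ closure D)
    (hDT : T ∈ D)
    (kn : ℕ → ℝ → EuclideanSpace ℝ (Fin d))
    (hconv : ∀ t ∈ D, Tendsto (fun n => kn n t) atTop (nhds (k t))) :
    eVariationOn k (Set.Icc 0 T) ≤
      Filter.liminf (fun n => eVariationOn (kn n) (Set.Icc 0 T)) atTop :=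
  calc eVariationOn k (Icc 0 T)
      ≤ eVariationOn k D := eVariationOn_Icc_le_of_subset_closure
        (fun _ => hk.continuousWithinAt_Icc) hDdense hDT
    _ ≤ liminf (fun n => eVariationOn (kn n) D) atTop := eVariationOn_le_liminf_of_tendsto hconv
    _ ≤ liminf (fun n => eVariationOn (kn n) (Icc 0 T)) atTop :=
        liminf_le_liminf (Eventually.of_forall fun n => eVariationOn.mono _ hDsub)

/-- Lower semicontinuity of the total variation (taken in `[0,∞]`) for a càdlàg limit,
under pointwise convergence on a dense subset `D` of `[0,T]` containing `0` and `T`. -/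
theorem eVariationOn_le_liminf_of_pointwise_on_dense {d : ℕ} (T : ℝ) (hT : 0 < T)
    (k : ℝ → EuclideanSpace ℝ (Fin d)) (hk : Cadlag T k)
    (D : Set ℝ) (hDsub : D ⊆ Set.Icc 0 T) (hDdense : Set.Icc (0 : ℝ) T ⊆ closure D)
    (hD0 : (0 : ℝ) ∈ D) (hDT : T ∈ D)
    (kn : ℕ → ℝ → EuclideanSpace ℝ (Fin d))
    (hconv : ∀ t ∈ D, Tendsto (fun n => kn n t) atTop (nhds (k t))) :
    eVariationOn k (Set.Icc 0 T) ≤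
      Filter.liminf (fun n => eVariationOn (kn n) (Set.Icc 0 T)) atTop :=
  eVariationOn_le_liminf_of_pointwise_on_dense_general T k hk D hDsub hDdense hDT kn hconv
end

section
/- Let T > 0, let k be a Stieltjes function with associated Lebesgue–Stieltjes measure μ_k, and let x : [0,T] → ℝ be càdlàg, with left limits denoted x(r−) (and x(0−) := x(0)). Then for every t ∈ (0,T], ∫_{(0,t]} x(r) μ_k(dr) = ∫_{(0,t]} x(r−) μ_k(dr) + Σ_{r ∈ (0,t]} (x(r) − x(r−)) (k(r) − k(r−)), where the sum has at most countably many nonzero terms and is absolutely convergent. -/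
open Filter Topology MeasureTheory

/-!
On `[0, t]` a càdlàg `x` is bounded, by compactness, and for each `ε > 0` it has only finitely
many jumps `|x r - x (r-)| ≥ ε`: near any point, `x` and its left-limit function both converge
to the same one-sided limits. So `x - x(·-)` vanishes off a countable set, its integral is
`∑ (x r - x (r-)) μ{r}` with `μ{r} = k r - k (r-)`, and the sum converges absolutely since
`∑ μ{r} ≤ μ (0, t]`. Measurability of `x` comes from its continuity off that countable set.
-/

open Set Function
open scoped ENNReal

theorem tendsto_nhdsWithin_of_forall_tendsto {X Y : Type*} [TopologicalSpace X]
    [TopologicalSpace Y] [RegularSpace Y] {F : X → Filter X} [∀ u, (F u).NeBot]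
    (hF : ∀ u, F u ≤ 𝓝 u) {U : Set X} (hU : IsOpen U) {f g : X → Y} {s : X} {y : Y}
    (hf : Tendsto f (𝓝[U] s) (𝓝 y)) (hg : ∀ u ∈ U, Tendsto f (F u) (𝓝 (g u))) :
    Tendsto g (𝓝[U] s) (𝓝 y) := by
  -- near `s`, each `g u` is a limit of values of `f` lying in a closed neighbourhood of `y`
  rw [(closed_nhds_basis y).tendsto_right_iff]
  rintro C ⟨hC, hCc⟩
  filter_upwards [eventually_eventually_nhdsWithin.2 (hf hC), self_mem_nhdsWithin] with u hu huU
  rw [hU.nhdsWithin_eq huU] at hu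
  exact hCc.mem_of_tendsto (hg u huU) (hF u hu)

theorem eventually_nhdsWithin_Icc_of_nhdsLT_of_nhdsGT {a b s : ℝ} {p : ℝ → Prop}
    (hs : s ∈ Icc a b) (hlt : a < s → ∀ᶠ u in 𝓝[<] s, p u) (hps : p s)
    (hgt : s < b → ∀ᶠ u in 𝓝[>] s, p u) :
    ∀ᶠ u in 𝓝[Icc a b] s, p u := by
  rw [← Ico_union_Icc_eq_Icc hs.1 hs.2, ← Ioc_insert_left hs.2, nhdsWithin_union,
    nhdsWithin_insert, eventually_sup, eventually_sup, eventually_pure]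
  refine ⟨?_, hps, ?_⟩
  · rcases hs.1.lt_or_eq with h | rfl
    · exact (hlt h).filter_mono (nhdsWithin_mono _ Ico_subset_Iio_self)
    · simp
  · rcases hs.2.lt_or_eq with h | rfl
    · exact (hgt h).filter_mono (nhdsWithin_mono _ Ioc_subset_Ioi_self)
    · simp

structure CadlagOn (a b : ℝ) (x xl : ℝ → ℝ) : Prop where
  tendsto_nhdsGT : ∀ s ∈ Ico a b, Tendsto x (𝓝[>] s) (𝓝 (x s))
  tendsto_nhdsLT : ∀ s ∈ Ioc a b, Tendsto x (𝓝[<] s) (𝓝 (xl s))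

theorem Cadlag.cadlagOn {T t : ℝ} {x xl : ℝ → ℝ} (hx : Cadlag T x)
    (hxl : ∀ r ∈ Ioc (0 : ℝ) T, Tendsto x (𝓝[Ico 0 r] r) (𝓝 (xl r))) (htT : t ≤ T) :
    CadlagOn 0 t x xl where
  tendsto_nhdsGT s hs := by
    have hsT : s < T := hs.2.trans_le htT
    simpa [nhdsWithin_Ioc_eq_nhdsGT hsT] using hx.1 s ⟨hs.1, hsT⟩
  tendsto_nhdsLT s hs := by
    simpa [nhdsWithin_Ico_eq_nhdsLT hs.1] using hxl s ⟨hs.1, hs.2.trans htT⟩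

namespace CadlagOn

variable {a b : ℝ} {x xl : ℝ → ℝ} (hx : CadlagOn a b x xl)
include hx

theorem tendsto_leftLim_nhdsGT {s y : ℝ} (hs : s ∈ Ico a b)
    (hy : Tendsto x (𝓝[>] s) (𝓝 y)) :
    Tendsto xl (𝓝[>] s) (𝓝 y) := by
  rw [← nhdsWithin_Ioo_eq_nhdsGT hs.2] at hy ⊢
  exact tendsto_nhdsWithin_of_forall_tendsto (fun _ ↦ nhdsWithin_le_nhds) isOpen_Ioo hy
    fun u hu ↦ hx.tendsto_nhdsLT u ⟨hs.1.trans_lt hu.1, hu.2.le⟩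

theorem tendsto_leftLim_nhdsLT {s y : ℝ} (hs : s ∈ Ioc a b)
    (hy : Tendsto x (𝓝[<] s) (𝓝 y)) :
    Tendsto xl (𝓝[<] s) (𝓝 y) := by
  rw [← nhdsWithin_Ioo_eq_nhdsLT hs.1] at hy ⊢
  exact tendsto_nhdsWithin_of_forall_tendsto (fun _ ↦ nhdsWithin_le_nhds) isOpen_Ioo hy
    fun u hu ↦ hx.tendsto_nhdsLT u ⟨hu.1, hu.2.le.trans hs.2⟩

theorem exists_forall_abs_le : ∃ M, ∀ r ∈ Icc a b, |x r| ≤ M := by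
  refine isCompact_Icc.induction_on ⟨0, by simp⟩
    (fun A B hAB ⟨M, hM⟩ ↦ ⟨M, fun r hr ↦ hM r (hAB hr)⟩)
    (fun A B ⟨M, hM⟩ ⟨N, hN⟩ ↦ ⟨max M N, fun r hr ↦ hr.elim
      (fun hr ↦ (hM r hr).trans (le_max_left _ _))
      (fun hr ↦ (hN r hr).trans (le_max_right _ _))⟩)
    fun s hs ↦ ⟨{u | |x u| ≤ max |x s| |xl s| + 1},
      eventually_nhdsWithin_Icc_of_nhdsLT_of_nhdsGT hs ?_ ?_ ?_, _, fun r hr ↦ hr⟩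
  · refine fun h ↦ ((hx.tendsto_nhdsLT s ⟨h, hs.2⟩).abs.eventually_lt_const
      (lt_add_one _)).mono fun u hu ↦ hu.le.trans ?_
    gcongr
    exact le_max_right _ _
  · exact le_add_of_le_of_nonneg (le_max_left _ _) zero_le_one
  · refine fun h ↦ ((hx.tendsto_nhdsGT s ⟨hs.1, h⟩).abs.eventually_lt_const
      (lt_add_one _)).mono fun u hu ↦ hu.le.trans ?_
    gcongr
    exact le_max_left _ _

theorem abs_leftLim_le {M : ℝ} (hM : ∀ r ∈ Icc a b, |x r| ≤ M) {s : ℝ}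
    (hs : s ∈ Ioc a b) : |xl s| ≤ M :=
  le_of_tendsto (hx.tendsto_nhdsLT s hs).abs <| eventually_of_mem (Ioo_mem_nhdsLT hs.1)
    fun u hu ↦ hM u ⟨hu.1.le, hu.2.le.trans hs.2⟩

theorem finite_setOf_le_abs_sub {ε : ℝ} (hε : 0 < ε) :
    {r ∈ Icc a b | ε ≤ |x r - xl r|}.Finite := by
  have hclose {l : Filter ℝ} {y : ℝ} (h : Tendsto x l (𝓝 y)) (h' : Tendsto xl l (𝓝 y)) :
      ∀ᶠ u in l, |x u - xl u| < ε :=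
    (h.sub h').abs.eventually_lt_const (by simpa using hε)
  refine isCompact_Icc.induction_on (p := fun A ↦ (A ∩ {r | ε ≤ |x r - xl r|}).Finite)
    (by simp)
    (fun A B hAB hB ↦ hB.subset (inter_subset_inter_left _ hAB))
    (fun A B hA hB ↦ by simpa only [union_inter_distrib_right] using hA.union hB)
    fun s hs ↦ ⟨{u | u = s ∨ |x u - xl u| < ε},
      eventually_nhdsWithin_Icc_of_nhdsLT_of_nhdsGT hs ?_ (.inl rfl) ?_,
      (finite_singleton s).subset fun u ⟨hu, hεu⟩ ↦ hu.resolve_right hεu.not_gt⟩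
  · intro h
    have hs' : s ∈ Ioc a b := ⟨h, hs.2⟩
    exact (hclose (hx.tendsto_nhdsLT s hs')
      (hx.tendsto_leftLim_nhdsLT hs' (hx.tendsto_nhdsLT s hs'))).mono fun u hu ↦ .inr hu
  · intro h
    have hs' : s ∈ Ico a b := ⟨hs.1, h⟩
    exact (hclose (hx.tendsto_nhdsGT s hs')
      (hx.tendsto_leftLim_nhdsGT hs' (hx.tendsto_nhdsGT s hs'))).mono fun u hu ↦ .inr hu

theorem countable_setOf_ne : {r ∈ Icc a b | x r ≠ xl r}.Countable := by
  refine (countable_iUnion fun n : ℕ ↦ (hx.finite_setOf_le_abs_sub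
    (Nat.one_div_pos_of_nat (n := n))).countable).mono fun r ⟨hr, hne⟩ ↦ ?_
  obtain ⟨n, hn⟩ := exists_nat_one_div_lt (abs_pos.2 (sub_ne_zero.2 hne))
  exact mem_iUnion.2 ⟨n, hr, hn.le⟩

theorem continuousWithinAt_Icc {s : ℝ} (hs : s ∈ Icc a b) (hxs : x s = xl s) :
    ContinuousWithinAt x (Icc a b) s := fun _ hV ↦
  eventually_nhdsWithin_Icc_of_nhdsLT_of_nhdsGT hs
    (fun h ↦ hx.tendsto_nhdsLT s ⟨h, hs.2⟩ (hxs ▸ hV)) (mem_of_mem_nhds hV)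
    (fun h ↦ hx.tendsto_nhdsGT s ⟨hs.1, h⟩ hV)

theorem aestronglyMeasurable_restrict_Icc (μ : Measure ℝ) :
    AEStronglyMeasurable x (μ.restrict (Icc a b)) := by
  refine ((aemeasurable_restrict_iff_comap_subtype measurableSet_Icc).2
    (measurable_of_countable_not_continuousAt ?_).aemeasurable).aestronglyMeasurable
  refine (hx.countable_setOf_ne.preimage Subtype.val_injective).mono fun s hs ↦ ?_
  refine ⟨s.2, fun hxs ↦ hs ?_⟩
  exact (continuousWithinAt_iff_continuousAt_domRestrict x s.2).1
    (hx.continuousWithinAt_Icc s.2 hxs)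

end CadlagOn

section CountableSupport

variable {X : Type*} [MeasurableSpace X] [MeasurableSingletonClass X] {μ : Measure X}
  {s : Set X}

theorem summable_measureReal_singleton (hs : μ s ≠ ∞) :
    Summable fun r : s ↦ μ.real {(r : X)} := by
  refine ENNReal.summable_toReal (ne_top_of_le_ne_top hs ?_)
  simpa using tsum_meas_le_meas_iUnion_of_disjoint μ (As := fun r : s ↦ {(r : X)})
    (fun _ ↦ measurableSet_singleton _)
    fun r r' h ↦ disjoint_singleton.2 (Subtype.coe_injective.ne h)

theorem aestronglyMeasurable_restrict_of_countable_support {E : Type*} [TopologicalSpace E]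
    [Zero E] {f : X → E} (hs : MeasurableSet s) (hc : (s ∩ support f).Countable) :
    AEStronglyMeasurable f (μ.restrict s) := by
  classical
  have := hc.to_subtype
  have hmeas : StronglyMeasurable fun r ↦ if h : r ∈ s ∩ support f then f r else 0 :=
    StronglyMeasurable.dite (f := fun r : ↥(s ∩ support f) ↦ f r) (g := fun _ ↦ 0)
      .of_discrete stronglyMeasurable_const hc.measurableSet
  refine hmeas.aestronglyMeasurable.congr (ae_restrict_of_forall_mem hs fun r hr ↦ ?_)
  by_cases hfr : f r = 0 <;> simp [hr, hfr]

theorem setIntegral_eq_tsum_of_countable_support {E : Type*} [NormedAddCommGroup E]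
    [NormedSpace ℝ E] [CompleteSpace E] {f : X → E} (hs : MeasurableSet s)
    (hc : (s ∩ support f).Countable) (hf : IntegrableOn f s μ) :
    ∫ r in s, f r ∂μ = ∑' r : s, μ.real {(r : X)} • f r := by
  rw [setIntegral_eq_of_subset_of_forall_sdiff_eq_zero hs inter_subset_left
      fun r hr ↦ notMem_support.1 fun h ↦ hr.2 ⟨hr.1, h⟩,
    setIntegral_countable f hc (hf.mono_set inter_subset_left)]
  refine (inclusion_injective inter_subset_left).tsum_eq
    (f := fun r : s ↦ μ.real {(r : X)} • f r) fun r hr ↦ ?_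
  exact ⟨⟨r, r.2, (smul_ne_zero_iff.1 hr).2⟩, rfl⟩

end CountableSupport

theorem StieltjesFunction.measureReal_singleton (k : StieltjesFunction ℝ) (r : ℝ) :
    k.measure.real {r} = k r - leftLim k r := by
  rw [measureReal_def, k.measure_singleton,
    ENNReal.toReal_ofReal (sub_nonneg.2 (k.mono.leftLim_le le_rfl))]

theorem stieltjes_integral_left_limits_jump_formula_general (T : ℝ)
    (k : StieltjesFunction ℝ) (x xl : ℝ → ℝ) (hx : Cadlag T x)
    (hxl : ∀ r ∈ Set.Ioc (0 : ℝ) T, Tendsto x (nhdsWithin r (Set.Ico 0 r)) (nhds (xl r)))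
    (t : ℝ) (ht : t ∈ Set.Ioc (0 : ℝ) T) :
    {r ∈ Set.Ioc (0 : ℝ) t | (x r - xl r) * (k r - Function.leftLim k r) ≠ 0}.Countable ∧
    Summable (fun r : Set.Ioc (0 : ℝ) t =>
      |(x r - xl r) * (k r - Function.leftLim k r)|) ∧
    (∫ r in Set.Ioc (0 : ℝ) t, x r ∂k.measure) =
      (∫ r in Set.Ioc (0 : ℝ) t, xl r ∂k.measure) +
        ∑' r : Set.Ioc (0 : ℝ) t, (x r - xl r) * (k r - Function.leftLim k r) := by
  have hcad := hx.cadlagOn hxl ht.2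
  obtain ⟨M, hM⟩ := hcad.exists_forall_abs_le
  have hjump (r : ℝ) :
      (x r - xl r) * (k r - leftLim k r) = k.measure.real {r} • (x r - xl r) := by
    rw [k.measureReal_singleton, smul_eq_mul, mul_comm]
  have hjumps : (Ioc 0 t ∩ support fun r ↦ x r - xl r).Countable :=
    hcad.countable_setOf_ne.mono <| by
      rintro r ⟨hr, hne⟩; exact ⟨Ioc_subset_Icc_self hr, sub_ne_zero.1 hne⟩
  have hbound (r : ℝ) (hr : r ∈ Ioc 0 t) : |x r - xl r| ≤ 2 * M := by
    linarith [abs_sub (x r) (xl r), hM r (Ioc_subset_Icc_self hr), hcad.abs_leftLim_le hM hr]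
  have hfin : k.measure (Ioc 0 t) < ∞ := by simp
  have hxi : IntegrableOn x (Ioc 0 t) k.measure :=
    .of_bound hfin ((hcad.aestronglyMeasurable_restrict_Icc _).mono_measure
      (Measure.restrict_mono Ioc_subset_Icc_self le_rfl)) M
      (ae_restrict_of_forall_mem measurableSet_Ioc fun r hr ↦ hM r (Ioc_subset_Icc_self hr))
  have hdi : IntegrableOn (fun r ↦ x r - xl r) (Ioc 0 t) k.measure :=
    .of_bound hfin (aestronglyMeasurable_restrict_of_countable_support measurableSet_Ioc hjumps)
      (2 * M) (ae_restrict_of_forall_mem measurableSet_Ioc hbound)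
  refine ⟨hjumps.mono ?_, ?_, ?_⟩
  · rintro r ⟨hr, hne⟩; exact ⟨hr, left_ne_zero_of_mul hne⟩
  · refine ((summable_measureReal_singleton hfin.ne).mul_left (2 * M)).of_nonneg_of_le
      (fun _ ↦ abs_nonneg _) fun r ↦ ?_
    rw [hjump, smul_eq_mul, abs_mul, abs_of_nonneg measureReal_nonneg, mul_comm]
    exact mul_le_mul_of_nonneg_right (hbound r r.2) measureReal_nonneg
  · have hsplit := integral_sub hxi hdi
    simp only [sub_sub_cancel] at hsplit
    rw [hsplit, setIntegral_eq_tsum_of_countable_support measurableSet_Ioc hjumps hdi]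
    simp only [hjump, sub_add_cancel]

/-- For a Stieltjes function `k` with Lebesgue–Stieltjes measure `k.measure`, and a
càdlàg `x : [0,T] → ℝ` with left limits `xl`, for every `t ∈ (0,T]` one has
`∫_{(0,t]} x dk = ∫_{(0,t]} x(·⁻) dk + Σ_{r ∈ (0,t]} (x r - x (r⁻)) (k r - k (r⁻))`,
where the sum has countably many nonzero terms and is absolutely convergent. -/
theorem stieltjes_integral_left_limits_jump_formula (T : ℝ) (hT : 0 < T)
    (k : StieltjesFunction ℝ) (x xl : ℝ → ℝ) (hx : Cadlag T x)
    (hxl0 : xl 0 = x 0)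
    (hxl : ∀ r ∈ Set.Ioc (0 : ℝ) T, Tendsto x (nhdsWithin r (Set.Ico 0 r)) (nhds (xl r)))
    (t : ℝ) (ht : t ∈ Set.Ioc (0 : ℝ) T) :
    {r ∈ Set.Ioc (0 : ℝ) t | (x r - xl r) * (k r - Function.leftLim k r) ≠ 0}.Countable ∧
    Summable (fun r : Set.Ioc (0 : ℝ) t =>
      |(x r - xl r) * (k r - Function.leftLim k r)|) ∧
    (∫ r in Set.Ioc (0 : ℝ) t, x r ∂k.measure) =
      (∫ r in Set.Ioc (0 : ℝ) t, xl r ∂k.measure) +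
        ∑' r : Set.Ioc (0 : ℝ) t, (x r - xl r) * (k r - Function.leftLim k r) :=
  stieltjes_integral_left_limits_jump_formula_general T k x xl hx hxl t ht
end

section
/- Let ℓ and k be Stieltjes functions with associated Lebesgue–Stieltjes measures μ_ℓ and μ_k. Then for every t > 0, ∫_{(0,t]} ℓ(r) μ_k(dr) + ∫_{(0,t]} k(r) μ_ℓ(dr) = ℓ(t) k(t) − ℓ(0) k(0) + Σ_{r ∈ (0,t]} (ℓ(r) − ℓ(r−)) (k(r) − k(r−)), where the sum has at most countably many nonzero terms and is absolutely convergent. -/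
/-!
Integrate over `(0,t]²` with respect to `μ_ℓ ⊗ μ_k`. The half-planes `{x ≤ y}` and `{y ≤ x}`
cover the square and meet in the diagonal. By Fubini their masses are `∫ (ℓ - ℓ(0)) dμ_k` and
`∫ (k - k(0)) dμ_ℓ`, the square has mass `(ℓ(t) - ℓ(0))(k(t) - k(0))`, and the diagonal only sees
the (countably many) common atoms, of masses `Δℓ(r) Δk(r)`. Inclusion–exclusion gives the formula.
-/

open MeasureTheory Set Function

namespace MeasureTheory.Measure

variable {α β : Type*} [MeasurableSpace α] [MeasurableSpace β]

theorem measureReal_prod_apply (μ : Measure α) (ν : Measure β) [IsFiniteMeasure ν]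
    {s : Set (α × β)} (hs : MeasurableSet s) :
    (μ.prod ν).real s = ∫ x, ν.real (Prod.mk x ⁻¹' s) ∂μ := by
  rw [measureReal_def, prod_apply hs]
  exact (integral_toReal (measurable_measure_prodMk_left hs).aemeasurable
    (ae_of_all _ fun _ => measure_lt_top _ _)).symm

theorem measureReal_prod_apply_symm (μ : Measure α) (ν : Measure β) [IsFiniteMeasure μ]
    [SFinite ν] {s : Set (α × β)} (hs : MeasurableSet s) :
    (μ.prod ν).real s = ∫ y, μ.real ((fun x => (x, y)) ⁻¹' s) ∂ν := by
  rw [measureReal_def, prod_apply_symm hs]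
  exact (integral_toReal (measurable_measure_prodMk_right hs).aemeasurable
    (ae_of_all _ fun _ => measure_lt_top _ _)).symm

theorem lintegral_measure_singleton [MeasurableSingletonClass α] (μ ν : Measure α) [SFinite ν] :
    ∫⁻ x, ν {x} ∂μ = ∑' x, μ {x} * ν {x} := by
  have hatoms : {x | 0 < ν {x}}.Countable := countable_meas_level_set_pos measurable_id
  have hsupp : support (fun x => ν {x}) ⊆ {x | 0 < ν {x}} :=
    fun _ hx => pos_iff_ne_zero.2 hx
  rw [← setLIntegral_eq_of_support_subset hsupp, lintegral_countable _ hatoms,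
    tsum_subtype_eq_of_support_subset (f := fun x => ν {x} * μ {x})
      ((support_mul_subset_left _ _).trans hsupp)]
  simp_rw [mul_comm]

theorem prod_diagonal [MeasurableEq α] (μ ν : Measure α) [SFinite ν] :
    μ.prod ν (diagonal α) = ∑' x, μ {x} * ν {x} := by
  rw [prod_apply measurableSet_diagonal, ← lintegral_measure_singleton]
  congr! with x
  ext y
  exact eq_comm

theorem hasSum_measureReal_singleton_mul [MeasurableEq α] (μ ν : Measure α)
    [IsFiniteMeasure μ] [IsFiniteMeasure ν] :
    HasSum (fun x => μ.real {x} * ν.real {x}) ((μ.prod ν).real (diagonal α)) := by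
  have hsum := ENNReal.hasSum_toReal (prod_diagonal μ ν ▸ measure_ne_top (μ.prod ν) _)
  rw [← ENNReal.tsum_toReal_eq fun x => ENNReal.mul_ne_top (measure_ne_top μ _)
    (measure_ne_top ν _), ← prod_diagonal] at hsum
  simp only [ENNReal.toReal_mul] at hsum
  exact hsum

section LinearOrder

variable [TopologicalSpace α] [LinearOrder α] [OrderClosedTopology α] [SecondCountableTopology α]
  [OpensMeasurableSpace α]

theorem integral_measureReal_Iic_add_integral_measureReal_Iic (μ ν : Measure α)
    [IsFiniteMeasure μ] [IsFiniteMeasure ν] :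
    ∫ y, μ.real (Iic y) ∂ν + ∫ x, ν.real (Iic x) ∂μ =
      μ.real univ * ν.real univ + (μ.prod ν).real (diagonal α) := by
  have hle : MeasurableSet {p : α × α | p.1 ≤ p.2} :=
    measurableSet_le measurable_fst measurable_snd
  have hge : MeasurableSet {p : α × α | p.2 ≤ p.1} :=
    measurableSet_le measurable_snd measurable_fst
  have hunion : {p : α × α | p.1 ≤ p.2} ∪ {p | p.2 ≤ p.1} = univ := by
    ext p
    simp [le_total]
  have hinter : {p : α × α | p.1 ≤ p.2} ∩ {p | p.2 ≤ p.1} = diagonal α := by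
    ext p
    simp [le_antisymm_iff]
  calc ∫ y, μ.real (Iic y) ∂ν + ∫ x, ν.real (Iic x) ∂μ
      = (μ.prod ν).real {p | p.1 ≤ p.2} + (μ.prod ν).real {p | p.2 ≤ p.1} := by
        rw [measureReal_prod_apply_symm μ ν hle, measureReal_prod_apply μ ν hge]
        rfl
    _ = (μ.prod ν).real univ + (μ.prod ν).real (diagonal α) := by
        rw [← measureReal_union_add_inter hge, hunion, hinter]
    _ = μ.real univ * ν.real univ + (μ.prod ν).real (diagonal α) := by
        rw [← univ_prod_univ, measureReal_prod_prod]

end LinearOrder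

end MeasureTheory.Measure

namespace StieltjesFunction

variable (f g : StieltjesFunction ℝ) {a b : ℝ}

instance isFiniteMeasure_restrict_Ioc : IsFiniteMeasure (f.measure.restrict (Ioc a b)) :=
  isFiniteMeasure_restrict.2 (by simp [f.measure_Ioc])

theorem measureReal_singleton_s9 (x : ℝ) : f.measure.real {x} = f x - leftLim f x := by
  rw [measureReal_def, f.measure_singleton,
    ENNReal.toReal_ofReal (sub_nonneg.2 (f.mono.leftLim_le le_rfl))]

theorem measureReal_Ioc (hab : a ≤ b) : f.measure.real (Ioc a b) = f b - f a := by
  rw [measureReal_def, f.measure_Ioc, ENNReal.toReal_ofReal (sub_nonneg.2 (f.mono hab))]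

theorem measureReal_restrict_Ioc_Iic {y : ℝ} (hy : y ∈ Ioc a b) :
    (f.measure.restrict (Ioc a b)).real (Iic y) = f y - f a := by
  rw [measureReal_restrict_apply measurableSet_Iic, Iic_inter_Ioc_of_le hy.2,
    f.measureReal_Ioc hy.1.le]

theorem setIntegral_Ioc_eq (hab : a ≤ b) :
    ∫ y in Ioc a b, f y ∂g.measure =
      ∫ y, (f.measure.restrict (Ioc a b)).real (Iic y) ∂(g.measure.restrict (Ioc a b)) +
        f a * (g b - g a) := by
  have hf : IntegrableOn f (Ioc a b) g.measure :=
    ((f.mono.monotoneOn _).integrableOn_isCompact isCompact_Icc).mono_set Ioc_subset_Icc_self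
  rw [setIntegral_congr_fun measurableSet_Ioc fun y hy => f.measureReal_restrict_Ioc_Iic hy,
    integral_sub hf (integrable_const _), integral_const, measureReal_restrict_apply_univ,
    g.measureReal_Ioc hab, smul_eq_mul]
  ring

theorem hasSum_jump_mul_jump (a b : ℝ) :
    HasSum (fun r : Ioc a b => (f r - leftLim f r) * (g r - leftLim g r))
      (((f.measure.restrict (Ioc a b)).prod (g.measure.restrict (Ioc a b))).real
        (diagonal ℝ)) := by
  refine (hasSum_subtype_iff_indicator
    (f := fun x => (f x - leftLim f x) * (g x - leftLim g x))).2 ?_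
  convert (f.measure.restrict (Ioc a b)).hasSum_measureReal_singleton_mul
    (g.measure.restrict (Ioc a b)) using 1
  ext x
  by_cases hx : x ∈ Ioc a b
  · simp [hx, measureReal_restrict_apply, measureReal_singleton_s9]
  · simp [hx, measureReal_restrict_apply]

end StieltjesFunction

/-- Integration by parts for two Stieltjes functions `ℓ, k` (with Lebesgue–Stieltjes
measures `ℓ.measure`, `k.measure`): for every `t > 0`,
`∫_{(0,t]} ℓ dk + ∫_{(0,t]} k dℓ = ℓ(t)k(t) - ℓ(0)k(0) + Σ_{r ∈ (0,t]} Δℓ(r) Δk(r)`,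
where the jump sum has countably many nonzero terms and is absolutely convergent. -/
theorem stieltjes_integration_by_parts (l k : StieltjesFunction ℝ) (t : ℝ) (ht : 0 < t) :
    {r ∈ Set.Ioc (0 : ℝ) t |
      (l r - Function.leftLim l r) * (k r - Function.leftLim k r) ≠ 0}.Countable ∧
    Summable (fun r : Set.Ioc (0 : ℝ) t =>
      |(l r - Function.leftLim l r) * (k r - Function.leftLim k r)|) ∧
    (∫ r in Set.Ioc (0 : ℝ) t, l r ∂k.measure) +
        (∫ r in Set.Ioc (0 : ℝ) t, k r ∂l.measure) =
      l t * k t - l 0 * k 0 +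
        ∑' r : Set.Ioc (0 : ℝ) t,
          (l r - Function.leftLim l r) * (k r - Function.leftLim k r) := by
  have hjumps := l.hasSum_jump_mul_jump k 0 t
  refine ⟨?_, hjumps.summable.abs, ?_⟩
  · exact k.countable_leftLim_ne.mono fun r hr =>
      mt (fun hk => by rw [hk, sub_self, mul_zero]) hr.2
  · have hparts := Measure.integral_measureReal_Iic_add_integral_measureReal_Iic
      (l.measure.restrict (Ioc 0 t)) (k.measure.restrict (Ioc 0 t))
    rw [measureReal_restrict_apply_univ, measureReal_restrict_apply_univ, l.measureReal_Ioc ht.le,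
      k.measureReal_Ioc ht.le] at hparts
    rw [hjumps.tsum_eq, l.setIntegral_Ioc_eq k ht.le, k.setIntegral_Ioc_eq l ht.le]
    linear_combination hparts
end

section
/- (Helly–Bray, uniform–pointwise version.) Let T > 0. Let x^n, x : [0,T] → ℝ be continuous with sup_{t ∈ [0,T]} |x^n(t) − x(t)| → 0 as n → ∞. Let k^n, k be Stieltjes functions with sup_{n} (k^n(T) − k^n(0)) < ∞, and let Q ⊆ [0,T) be a set of Lebesgue measure zero such that k^n(t) → k(t) as n → ∞ for every t ∈ [0,T] ∖ Q. Then for all s, t ∈ [0,T] ∖ Q with s ≤ t, ∫_{(s,t]} x^n(r) μ_{k^n}(dr) → ∫_{(s,t]} x(r) μ_k(dr) as n → ∞. -/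
/-!
Fix `s ≤ t` off `Q`. Since `Q` is null, its complement is dense, so `[s, t]` has partitions of
arbitrarily small mesh whose nodes `aᵢ` all avoid `Q`. If `x` oscillates by less than `η` on each
cell and `xⁿ` is `η`-close to `x`, then both `∫_{(s,t]} xⁿ dkⁿ` and `∫_{(s,t]} x dk` are within
`2η · (total variation)` of the Riemann–Stieltjes sums `∑ x(aᵢ) Δkⁿ(aᵢ)` and `∑ x(aᵢ) Δk(aᵢ)`;
the variations are uniformly bounded, and the former sums converge to the latter because `kⁿ → k`
at every node.
-/

open Set Filter Topology MeasureTheory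

theorem tendsto_of_forall_exists_approx {ι α : Type*} [PseudoMetricSpace α] {l : Filter ι}
    {u : ι → α} {a : α}
    (h : ∀ ε > 0, ∃ (v : ι → α) (b : α), Tendsto v l (𝓝 b) ∧
      (∀ᶠ i in l, dist (u i) (v i) ≤ ε) ∧ dist a b ≤ ε) :
    Tendsto u l (𝓝 a) := by
  refine Metric.tendsto_nhds.2 fun ε hε => ?_
  obtain ⟨v, b, hvb, huv, hab⟩ := h (ε / 3) (by positivity)
  filter_upwards [huv, Metric.tendsto_nhds.1 hvb (ε / 3) (by positivity)] with i hui hvi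
  calc dist (u i) a ≤ dist (u i) (v i) + dist (v i) b + dist b a := dist_triangle4 _ _ _ _
    _ < ε := by linarith [dist_comm a b]

theorem Dense.exists_monotone_partition {S : Set ℝ} (hS : Dense S) {s t δ : ℝ}
    (hs : s ∈ S) (ht : t ∈ S) (hst : s ≤ t) (hδ : 0 < δ) :
    ∃ (a : ℕ → ℝ) (m : ℕ), Monotone a ∧ a 0 = s ∧ a m = t ∧ (∀ i, a i ∈ Icc s t ∩ S) ∧
      ∀ i, a (i + 1) - a i < δ := by
  set η := δ / 2 with hη_def
  have hη : 0 < η := by positivity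
  -- one node of `S` in each cell `(s + (i - 1)η, s + iη)`, then clamped to `[s, t]`
  have hnode : ∀ i : ℕ, ∃ c ∈ S, c ∈ Ioo (s + i * η - η) (s + i * η) :=
    fun i => hS.exists_between (by linarith)
  choose c hcS hc using hnode
  have hc_succ : ∀ i, c (i + 1) - c i < δ ∧ c i ≤ c (i + 1) := fun i => by
    obtain ⟨hi₁, hi₂⟩ := hc i
    obtain ⟨hj₁, hj₂⟩ := hc (i + 1)
    push_cast at hj₁ hj₂
    constructor <;> linarith
  obtain ⟨m, hm⟩ := exists_nat_gt ((t - s) / η + 1)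
  have hcm : t ≤ c m := by
    have : t - s < (m - 1) * η := by rwa [← div_lt_iff₀ hη, lt_sub_iff_add_lt]
    linarith [(hc m).1]
  refine ⟨fun i => projIcc s t hst (c i), m,
    fun i j hij => monotone_projIcc hst (monotone_nat_of_le_succ (fun i => (hc_succ i).2) hij),
    by simp [projIcc_of_le_left hst (by simpa using (hc 0).2.le)],
    by simp [projIcc_of_right_le hst hcm], fun i => ⟨Subtype.prop _, ?_⟩, fun i => ?_⟩
  · change max s (min t (c i)) ∈ S
    rcases max_choice s (min t (c i)) with h | h <;> rw [h]
    · exact hs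
    rcases min_choice t (c i) with h | h <;> rw [h]
    exacts [ht, hcS i]
  · calc _ ≤ |c (i + 1) - c i| := (le_abs_self _).trans (abs_projIcc_sub_projIcc hst)
      _ < δ := by rw [abs_of_nonneg (sub_nonneg.2 (hc_succ i).2)]; exact (hc_succ i).1

namespace StieltjesFunction

variable (F : StieltjesFunction ℝ)

def riemannSum (f : ℝ → ℝ) (a : ℕ → ℝ) (m : ℕ) : ℝ :=
  ∑ i ∈ Finset.range m, f (a i) * (F (a (i + 1)) - F (a i))

theorem measureReal_Ioc_s11 {u v : ℝ} (huv : u ≤ v) : F.measure.real (Ioc u v) = F v - F u := by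
  rw [measureReal_def, F.measure_Ioc, ENNReal.toReal_ofReal (sub_nonneg.2 (F.mono huv))]

theorem abs_setIntegral_Ioc_sub_mul_le {g : ℝ → ℝ} {u v c ε : ℝ} (huv : u ≤ v)
    (hg : IntegrableOn g (Ioc u v) F.measure) (hgc : ∀ r ∈ Ioc u v, |g r - c| ≤ ε) :
    |∫ r in Ioc u v, g r ∂F.measure - c * (F v - F u)| ≤ ε * (F v - F u) := by
  have hfin : F.measure (Ioc u v) < ⊤ := by rw [F.measure_Ioc]; exact ENNReal.ofReal_lt_top
  have hconst : ∫ _ in Ioc u v, c ∂F.measure = c * (F v - F u) := by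
    rw [setIntegral_const, F.measureReal_Ioc_s11 huv, smul_eq_mul, mul_comm]
  rw [← hconst, ← integral_sub hg (integrableOn_const hfin.ne), ← F.measureReal_Ioc_s11 huv]
  exact norm_setIntegral_le_of_norm_le_const hfin fun r hr =>
    (Real.norm_eq_abs _).trans_le (hgc r hr)

theorem abs_setIntegral_Ioc_sub_riemannSum_le {f g : ℝ → ℝ} {a : ℕ → ℝ} (ha : Monotone a)
    {m : ℕ} {η η' : ℝ} (hg : IntegrableOn g (Ioc (a 0) (a m)) F.measure)
    (hgf : ∀ r ∈ Ioc (a 0) (a m), |g r - f r| ≤ η')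
    (hf : ∀ i < m, ∀ r ∈ Ioc (a i) (a (i + 1)), |f r - f (a i)| ≤ η) :
    |∫ r in Ioc (a 0) (a m), g r ∂F.measure - F.riemannSum f a m|
      ≤ (η' + η) * (F (a m) - F (a 0)) := by
  have hcell : ∀ i < m, Ioc (a i) (a (i + 1)) ⊆ Ioc (a 0) (a m) := fun i hi =>
    Ioc_subset_Ioc (ha i.zero_le) (ha hi)
  have hsplit : ∫ r in Ioc (a 0) (a m), g r ∂F.measure =
      ∑ i ∈ Finset.range m, ∫ r in Ioc (a i) (a (i + 1)), g r ∂F.measure := by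
    rw [← intervalIntegral.integral_of_le (ha m.zero_le),
      ← intervalIntegral.sum_integral_adjacent_intervals fun i hi =>
        (intervalIntegrable_iff_integrableOn_Ioc_of_le (ha i.le_succ)).2
          (hg.mono_set (hcell i hi))]
    exact Finset.sum_congr rfl fun i _ => intervalIntegral.integral_of_le (ha i.le_succ)
  calc _ = |∑ i ∈ Finset.range m, (∫ r in Ioc (a i) (a (i + 1)), g r ∂F.measure
          - f (a i) * (F (a (i + 1)) - F (a i)))| := by
        rw [hsplit, riemannSum, Finset.sum_sub_distrib]
    _ ≤ ∑ i ∈ Finset.range m, (η' + η) * (F (a (i + 1)) - F (a i)) := by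
      refine (Finset.abs_sum_le_sum_abs _ _).trans <| Finset.sum_le_sum fun i hi => ?_
      rw [Finset.mem_range] at hi
      refine F.abs_setIntegral_Ioc_sub_mul_le (ha i.le_succ) (hg.mono_set (hcell i hi))
        fun r hr => ?_
      linarith [abs_sub_le (g r) (f r) (f (a i)), hf i hi r hr, hgf r (hcell i hi hr)]
    _ = (η' + η) * (F (a m) - F (a 0)) := by
      rw [← Finset.mul_sum, Finset.sum_range_sub (fun i => F (a i))]

variable {F}

theorem tendsto_riemannSum {ι : Type*} {l : Filter ι} {Fn : ι → StieltjesFunction ℝ}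
    (f : ℝ → ℝ) (a : ℕ → ℝ) (m : ℕ)
    (hFn : ∀ i ≤ m, Tendsto (fun n => Fn n (a i)) l (𝓝 (F (a i)))) :
    Tendsto (fun n => (Fn n).riemannSum f a m) l (𝓝 (F.riemannSum f a m)) :=
  tendsto_finsetSum _ fun i hi => tendsto_const_nhds.mul
    ((hFn (i + 1) (Finset.mem_range.1 hi)).sub (hFn i (Finset.mem_range.1 hi).le))

end StieltjesFunction

theorem ContinuousOn.exists_partition_abs_setIntegral_sub_riemannSum_le {f : ℝ → ℝ}
    {S : Set ℝ} {s t ε : ℝ} (hf : ContinuousOn f (Icc s t)) (hS : Dense S) (hs : s ∈ S)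
    (ht : t ∈ S) (hst : s ≤ t) (hε : 0 < ε) :
    ∃ (a : ℕ → ℝ) (m : ℕ), (∀ i, a i ∈ Icc s t ∩ S) ∧
      ∀ (F : StieltjesFunction ℝ) (g : ℝ → ℝ), ContinuousOn g (Icc s t) →
        (∀ r ∈ Icc s t, |g r - f r| ≤ ε) →
        |∫ r in Ioc s t, g r ∂F.measure - F.riemannSum f a m| ≤ 2 * ε * (F t - F s) := by
  obtain ⟨δ, hδ, hfδ⟩ := Metric.uniformContinuousOn_iff.1
    (isCompact_Icc.uniformContinuousOn_of_continuous hf) ε hε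
  obtain ⟨a, m, ha, rfl, rfl, haS, hmesh⟩ := hS.exists_monotone_partition hs ht hst hδ
  have hosc : ∀ i, ∀ r ∈ Ioc (a i) (a (i + 1)), |f r - f (a i)| ≤ ε := fun i r hr => by
    refine (hfδ r ⟨(haS i).1.1.trans hr.1.le, hr.2.trans (haS (i + 1)).1.2⟩ (a i)
      (haS i).1 ?_).le
    rw [Real.dist_eq, abs_of_pos (sub_pos.2 hr.1)]
    linarith [hmesh i, hr.2]
  refine ⟨a, m, haS, fun F g hg hgf => ?_⟩
  rw [two_mul]
  exact F.abs_setIntegral_Ioc_sub_riemannSum_le ha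
    (hg.integrableOn_Icc.mono_set Ioc_subset_Icc_self)
    (fun r hr => hgf r (Ioc_subset_Icc_self hr)) fun i _ => hosc i

theorem helly_bray_uniform_pointwise_general (T : ℝ)
    (xn : ℕ → ℝ → ℝ) (x : ℝ → ℝ)
    (hxnc : ∀ n, ContinuousOn (xn n) (Set.Icc 0 T)) (hxc : ContinuousOn x (Set.Icc 0 T))
    (hxu : TendstoUniformlyOn xn x atTop (Set.Icc 0 T))
    (kn : ℕ → StieltjesFunction ℝ) (k : StieltjesFunction ℝ)
    (hbd : ∃ M : ℝ, ∀ n, kn n T - kn n 0 ≤ M)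
    (Q : Set ℝ) (hQnull : MeasureTheory.volume Q = 0)
    (hkconv : ∀ t ∈ Set.Icc (0 : ℝ) T \ Q, Tendsto (fun n => kn n t) atTop (nhds (k t))) :
    ∀ s ∈ Set.Icc (0 : ℝ) T \ Q, ∀ t ∈ Set.Icc (0 : ℝ) T \ Q, s ≤ t →
      Tendsto (fun n => ∫ r in Set.Ioc s t, xn n r ∂(kn n).measure) atTop
        (nhds (∫ r in Set.Ioc s t, x r ∂k.measure)) := by
  obtain ⟨M, hM⟩ := hbd
  rintro s ⟨hs, hsQ⟩ t ⟨ht, htQ⟩ hst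
  have hsub : Icc s t ⊆ Icc 0 T := Icc_subset_Icc hs.1 ht.2
  obtain ⟨B, hB, hBn, hBk⟩ : ∃ B > 0, (∀ n, kn n t - kn n s ≤ B) ∧ k t - k s ≤ B :=
    ⟨|M| + |k t - k s| + 1, by positivity,
      fun n => by linarith [sub_le_sub ((kn n).mono ht.2) ((kn n).mono hs.1), hM n,
        le_abs_self M, abs_nonneg (k t - k s)],
      by linarith [le_abs_self (k t - k s), abs_nonneg M]⟩
  refine tendsto_of_forall_exists_approx fun ε hε => ?_
  obtain ⟨η, hη, hηB⟩ : ∃ η > 0, 2 * η * B = ε := ⟨ε / (2 * B), by positivity, by field_simp⟩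
  obtain ⟨a, m, haQ, hRS⟩ := (hxc.mono hsub).exists_partition_abs_setIntegral_sub_riemannSum_le
    (Measure.dense_of_ae (measure_eq_zero_iff_ae_notMem.1 hQnull)) hsQ htQ hst hη
  refine ⟨fun n => (kn n).riemannSum x a m, k.riemannSum x a m,
    StieltjesFunction.tendsto_riemannSum x a m fun i _ => hkconv _ ⟨hsub (haQ i).1, (haQ i).2⟩,
    ?_, (hRS k x (hxc.mono hsub) fun r _ => by simpa using hη.le).trans ?_⟩
  · filter_upwards [Metric.tendstoUniformlyOn_iff.1 hxu η hη] with n hn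
    refine (hRS (kn n) (xn n) ((hxnc n).mono hsub) fun r hr => ?_).trans ?_
    · rw [abs_sub_comm]
      exact (hn r (hsub hr)).le
    · rw [← hηB]; gcongr; exact hBn n
  · rw [← hηB]; gcongr

/-- Helly–Bray theorem, uniform–pointwise version: if `xⁿ → x` uniformly on `[0,T]`
(`xⁿ, x` continuous), the Stieltjes functions `kⁿ` have uniformly bounded variation
on `[0,T]`, and `kⁿ(t) → k(t)` for all `t ∈ [0,T]` outside a Lebesgue-null set
`Q ⊆ [0,T)`, then `∫_{(s,t]} xⁿ dkⁿ → ∫_{(s,t]} x dk` for all `s ≤ t` in `[0,T] ∖ Q`. -/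
theorem helly_bray_uniform_pointwise (T : ℝ) (hT : 0 < T)
    (xn : ℕ → ℝ → ℝ) (x : ℝ → ℝ)
    (hxnc : ∀ n, ContinuousOn (xn n) (Set.Icc 0 T)) (hxc : ContinuousOn x (Set.Icc 0 T))
    (hxu : TendstoUniformlyOn xn x atTop (Set.Icc 0 T))
    (kn : ℕ → StieltjesFunction ℝ) (k : StieltjesFunction ℝ)
    (hbd : ∃ M : ℝ, ∀ n, kn n T - kn n 0 ≤ M)
    (Q : Set ℝ) (hQsub : Q ⊆ Set.Ico 0 T) (hQnull : MeasureTheory.volume Q = 0)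
    (hkconv : ∀ t ∈ Set.Icc (0 : ℝ) T \ Q, Tendsto (fun n => kn n t) atTop (nhds (k t))) :
    ∀ s ∈ Set.Icc (0 : ℝ) T \ Q, ∀ t ∈ Set.Icc (0 : ℝ) T \ Q, s ≤ t →
      Tendsto (fun n => ∫ r in Set.Ioc s t, xn n r ∂(kn n).measure) atTop
        (nhds (∫ r in Set.Ioc s t, x r ∂k.measure)) :=
  helly_bray_uniform_pointwise_general T xn x hxnc hxc hxu kn k hbd Q hQnull hkconv
end

section
/- (Helly–Bray, uniform–uniform version.) Let T > 0. Let x^n, x : [0,T] → ℝ be càdlàg with sup_{t ∈ [0,T]} |x^n(t) − x(t)| → 0 as n → ∞. Let k^n, k be Stieltjes functions with sup_n (k^n(T) − k^n(0)) < ∞ and sup_{t ∈ [0,T]} |k^n(t) − k(t)| → 0 as n → ∞. Then for all 0 ≤ s ≤ t ≤ T, ∫_{(s,t]} x^n(r) μ_{k^n}(dr) → ∫_{(s,t]} x(r) μ_k(dr) as n → ∞. -/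
/-!
Fix `ε > 0`. Near each point a càdlàg `x` is `ε`-close to a constant on a small open interval to
the left (its left limit) and to the right (its value), so a supremum argument exhausts `[s, t]`
by intervals `(u, v]` on which `x` is `ε`-close to a constant `L` on `(u, v)`. On such an interval
the integrals of `L` and of the atom at `v` only involve `kⁿ(u)`, `kⁿ(v)` and the left limit
`kⁿ(v-)`, which converge by uniform convergence, while the uniform convergence `xⁿ → x` is paid
for with the total mass of `(u, v)`, which stays bounded. Hence
`limsup |∫ xⁿ dkⁿ - ∫ x dk| ≤ 2 ε μ_k (s, t]` for every `ε > 0`.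
-/

open Filter Topology MeasureTheory

open Set Metric
open scoped ENNReal

theorem mem_of_forall_exists_step {α : Type*} [ConditionallyCompleteLinearOrder α]
    {s t : α} {S : Set α} {Q : α → α → Prop} (hst : s ≤ t) (hs : s ∈ S)
    (hstep : ∀ u ∈ S ∩ Icc s t, ∀ v ∈ Ioc u t, Q u v → v ∈ S)
    (hleft : ∀ c ∈ Ioc s t, ∃ a < c, ∀ u ∈ Ico a c, Q u c)
    (hright : ∀ c ∈ Ico s t, ∃ b > c, ∀ v ∈ Ioc c b, Q c v) : t ∈ S := by
  have hsS : s ∈ S ∩ Icc s t := ⟨hs, le_rfl, hst⟩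
  obtain ⟨c, hc⟩ : ∃ c, IsLUB (S ∩ Icc s t) c :=
    ⟨_, isLUB_csSup ⟨s, hsS⟩ ⟨t, fun u hu => hu.2.2⟩⟩
  have hsc : s ≤ c := hc.1 hsS
  have hct : c ≤ t := hc.2 fun u hu => hu.2.2
  have hcS : c ∈ S := by
    rcases hsc.eq_or_lt with rfl | hsc
    · exact hs
    obtain ⟨a, hac, ha⟩ := hleft c ⟨hsc, hct⟩
    obtain ⟨u, huS, hau, huc⟩ := hc.exists_between hac
    rcases huc.eq_or_lt with rfl | huc
    · exact huS.1
    · exact hstep u huS c ⟨huc, hct⟩ (ha u ⟨hau.le, huc⟩)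
  rcases hct.eq_or_lt with rfl | hct
  · exact hcS
  obtain ⟨b, hcb, hb⟩ := hright c ⟨hsc, hct⟩
  have hcv : c < min b t := lt_min hcb hct
  have hvS : min b t ∈ S := hstep c ⟨hcS, hsc, hct.le⟩ _ ⟨hcv, min_le_right _ _⟩
    (hb _ ⟨hcv, min_le_left _ _⟩)
  exact ((hc.1 ⟨hvS, hsc.trans hcv.le, min_le_right _ _⟩).not_gt hcv).elim

theorem aestronglyMeasurable_restrict_Ioc_of_continuousWithinAt_Icc {E : Type*}
    [TopologicalSpace E] [TopologicalSpace.PseudoMetrizableSpace E] {f : ℝ → E} {a b : ℝ}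
    (hf : ∀ r ∈ Ioc a b, ContinuousWithinAt f (Icc r b) r) (μ : Measure ℝ) :
    AEStronglyMeasurable f (μ.restrict (Ioc a b)) := by
  -- `f` is the pointwise limit of `f` sampled on the grids `ℤ / (m + 1)`, rounding upwards
  set grid : ℕ → ℝ → ℝ := fun m r => min (⌈r * (m + 1)⌉ / (m + 1)) b
  have hmeas : ∀ m, StronglyMeasurable fun r => f (grid m r) := fun m =>
    (StronglyMeasurable.of_discrete (f := fun j : ℤ => f (min (j / (m + 1)) b))).comp_measurable
      (measurable_id.mul_const _).ceil
  refine aestronglyMeasurable_of_tendsto_ae atTop (fun m => (hmeas m).aestronglyMeasurable) ?_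
  refine (ae_restrict_iff' measurableSet_Ioc).2 (Eventually.of_forall fun r hr => ?_)
  have hle : ∀ m : ℕ, r ≤ ⌈r * (m + 1)⌉ / (m + 1) := fun m => by
    rw [le_div_iff₀ (by positivity)]; exact Int.le_ceil _
  have hge : ∀ m : ℕ, ⌈r * (m + 1)⌉ / (m + 1) ≤ r + 1 / (m + 1) := fun m => by
    rw [div_le_iff₀ (by positivity), add_mul, one_div_mul_cancel (by positivity)]
    exact (Int.ceil_lt_add_one _).le
  have hlim : Tendsto (fun m : ℕ => (⌈r * (m + 1)⌉ : ℝ) / (m + 1)) atTop (𝓝 r) :=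
    tendsto_of_tendsto_of_tendsto_of_le_of_le tendsto_const_nhds
      (by simpa using tendsto_one_div_add_atTop_nhds_zero_nat.const_add r) hle hge
  refine (hf r hr).tendsto.comp (tendsto_nhdsWithin_iff.2 ⟨?_, Eventually.of_forall fun m =>
    ⟨le_min (hle m) hr.2, min_le_right _ _⟩⟩)
  simpa [min_eq_left hr.2] using hlim.min (tendsto_const_nhds (x := b))

namespace Cadlag

variable {E : Type*} {T c : ℝ} {x : ℝ → E}

theorem tendsto_nhdsGT [TopologicalSpace E] (hx : Cadlag T x) (hc : c ∈ Ico 0 T) :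
    Tendsto x (𝓝[>] c) (𝓝 (x c)) :=
  nhdsWithin_Ioc_eq_nhdsGT hc.2 ▸ hx.1 c hc

theorem exists_tendsto_nhdsLT [TopologicalSpace E] (hx : Cadlag T x) (hc : c ∈ Ioc 0 T) :
    ∃ L, Tendsto x (𝓝[<] c) (𝓝 L) :=
  nhdsWithin_Ico_eq_nhdsLT hc.1 ▸ hx.2 c hc

theorem continuousWithinAt_Icc_s12 [TopologicalSpace E] (hx : Cadlag T x) (hc : c ∈ Icc 0 T) :
    ContinuousWithinAt x (Icc c T) c := by
  rcases hc.2.eq_or_lt with rfl | hcT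
  · simp [ContinuousWithinAt, Icc_self, tendsto_pure_nhds]
  · rw [ContinuousWithinAt, ← Ioc_insert_left hc.2, nhdsWithin_insert, tendsto_sup]
    exact ⟨tendsto_pure_nhds x c, hx.1 c ⟨hc.1, hcT⟩⟩

variable [PseudoMetricSpace E]

theorem exists_forall_Ico_mapsTo_closedBall (hx : Cadlag T x) (hc : c ∈ Ioc 0 T) {ε : ℝ}
    (hε : 0 < ε) : ∃ a < c, ∀ u ∈ Ico a c, ∃ L, MapsTo x (Ioo u c) (closedBall L ε) := by
  obtain ⟨L, hL⟩ := hx.exists_tendsto_nhdsLT hc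
  obtain ⟨a, hac, ha⟩ := mem_nhdsLT_iff_exists_Ioo_subset.1 (hL (closedBall_mem_nhds L hε))
  exact ⟨a, hac, fun u hu => ⟨L, fun r hr => ha ⟨hu.1.trans_lt hr.1, hr.2⟩⟩⟩

theorem exists_forall_Ioc_mapsTo_closedBall (hx : Cadlag T x) (hc : c ∈ Ico 0 T) {ε : ℝ}
    (hε : 0 < ε) : ∃ b > c, ∀ v ∈ Ioc c b, ∃ L, MapsTo x (Ioo c v) (closedBall L ε) := by
  obtain ⟨b, hcb, hb⟩ :=
    mem_nhdsGT_iff_exists_Ioo_subset.1 (hx.tendsto_nhdsGT hc (closedBall_mem_nhds (x c) hε))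
  exact ⟨b, hcb, fun v hv => ⟨x c, fun r hr => hb ⟨hr.1, hr.2.trans_le hv.2⟩⟩⟩

theorem mem_of_forall_step (hx : Cadlag T x) {ε : ℝ} (hε : 0 < ε) {s t : ℝ} (hs : 0 ≤ s)
    (hst : s ≤ t) (htT : t ≤ T) {S : Set ℝ} (hsS : s ∈ S)
    (hstep : ∀ u ∈ S ∩ Icc s t, ∀ v ∈ Ioc u t, ∀ L, MapsTo x (Ioo u v) (closedBall L ε) →
      v ∈ S) : t ∈ S :=
  mem_of_forall_exists_step hst hsS (fun u hu v hv ⟨L, hL⟩ => hstep u hu v hv L hL)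
    (fun _ hc => hx.exists_forall_Ico_mapsTo_closedBall
      ⟨hs.trans_lt hc.1, hc.2.trans htT⟩ hε)
    (fun _ hc => hx.exists_forall_Ioc_mapsTo_closedBall
      ⟨hs.trans hc.1, hc.2.trans_le htT⟩ hε)

theorem isBounded_image_Icc (hx : Cadlag T x) {s t : ℝ} (hs : 0 ≤ s) (htT : t ≤ T) :
    Bornology.IsBounded (x '' Icc s t) := by
  rcases lt_or_ge t s with hts | hst
  · simp [Icc_eq_empty_of_lt hts]
  refine hx.mem_of_forall_step one_pos hs hst htT (S := {u | Bornology.IsBounded (x '' Icc s u)})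
    (by simp) fun u ⟨hu, hsu, _⟩ v ⟨huv, _⟩ L hL => ?_
  show Bornology.IsBounded (x '' Icc s v)
  rw [← Icc_union_Ioc_eq_Icc hsu huv.le, ← Ioo_insert_right huv, image_union,
    image_insert_eq]
  exact hu.union ((isBounded_closedBall.subset hL.image_subset).insert _)

end Cadlag

theorem Cadlag.integrableOn_Ioc {E : Type*} [NormedAddCommGroup E] {T : ℝ} {x : ℝ → E}
    (hx : Cadlag T x) {s t : ℝ} (hs : 0 ≤ s) (htT : t ≤ T) (μ : Measure ℝ)
    [IsLocallyFiniteMeasure μ] : IntegrableOn x (Ioc s t) μ := by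
  obtain ⟨C, hC⟩ := isBounded_iff_forall_norm_le.1 (hx.isBounded_image_Icc hs htT)
  have hcont : ∀ r ∈ Ioc s t, ContinuousWithinAt x (Icc r t) r := fun r hr =>
    (hx.continuousWithinAt_Icc_s12 ⟨hs.trans hr.1.le, hr.2.trans htT⟩).mono
      (Icc_subset_Icc_right htT)
  refine Integrable.mono' (integrableOn_const measure_Ioc_lt_top.ne (C := C))
    (aestronglyMeasurable_restrict_Ioc_of_continuousWithinAt_Icc hcont μ) ?_
  exact (ae_restrict_iff' measurableSet_Ioc).2 (Eventually.of_forall fun r hr =>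
    hC _ (mem_image_of_mem x (Ioc_subset_Icc_self hr)))

section SetIntegral

variable {E : Type*} [NormedAddCommGroup E] [NormedSpace ℝ E]

theorem setIntegral_Ioc_eq_setIntegral_Ioo_add [CompleteSpace E] {α : Type*} [LinearOrder α]
    [MeasurableSpace α] [MeasurableSingletonClass α] {f : α → E} {μ : Measure α} {a b : α}
    (hab : a < b) (hf : IntegrableOn f (Ioc a b) μ) :
    ∫ r in Ioc a b, f r ∂μ = ∫ r in Ioo a b, f r ∂μ + μ.real {b} • f b := by
  rw [← Ioo_insert_right hab] at hf ⊢
  rw [insert_eq, union_comm] at hf ⊢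
  rw [setIntegral_union (disjoint_singleton_right.2 fun h => h.2.false) (measurableSet_singleton b)
    hf.left_of_union hf.right_of_union, integral_singleton]

theorem dist_setIntegral_Ioc_le_add {f g : ℝ → E} {ν μ : Measure ℝ} {s u v : ℝ} (hsu : s ≤ u)
    (huv : u ≤ v) (hf : IntegrableOn f (Ioc s v) ν) (hg : IntegrableOn g (Ioc s v) μ) :
    dist (∫ r in Ioc s v, f r ∂ν) (∫ r in Ioc s v, g r ∂μ)
      ≤ dist (∫ r in Ioc s u, f r ∂ν) (∫ r in Ioc s u, g r ∂μ)
        + dist (∫ r in Ioc u v, f r ∂ν) (∫ r in Ioc u v, g r ∂μ) := by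
  have hsplit : ∀ (h : ℝ → E) (m : Measure ℝ), IntegrableOn h (Ioc s v) m →
      ∫ r in Ioc s v, h r ∂m = ∫ r in Ioc s u, h r ∂m + ∫ r in Ioc u v, h r ∂m := by
    intro h m hh
    rw [← Ioc_union_Ioc_eq_Ioc hsu huv] at hh ⊢
    exact setIntegral_union (Ioc_disjoint_Ioc_of_le le_rfl) measurableSet_Ioc
      hh.left_of_union hh.right_of_union
  rw [hsplit f ν hf, hsplit g μ hg]
  exact dist_add_add_le _ _ _ _

theorem norm_setIntegral_sub_setIntegral_le_of_mapsTo_closedBall [CompleteSpace E] {α : Type*}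
    [MeasurableSpace α] {f : α → E} {s : Set α} {μ ν : Measure α} {L : E} {ε : ℝ}
    (hL : MapsTo f s (closedBall L ε)) (hν : ν s < ∞) (hμ : μ s < ∞)
    (hfν : IntegrableOn f s ν) (hfμ : IntegrableOn f s μ) :
    ‖∫ r in s, f r ∂ν - ∫ r in s, f r ∂μ‖
      ≤ ε * ν.real s + ε * μ.real s + |ν.real s - μ.real s| * ‖L‖ := by
  have hsplit : ∀ m : Measure α, m s < ∞ → IntegrableOn f s m →
      ∫ r in s, f r ∂m = ∫ r in s, (f r - L) ∂m + m.real s • L := fun m hm hf => by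
    rw [integral_sub hf (integrableOn_const hm.ne), setIntegral_const, sub_add_cancel]
  have hbound : ∀ m : Measure α, m s < ∞ → ‖∫ r in s, (f r - L) ∂m‖ ≤ ε * m.real s :=
    fun m hm => norm_setIntegral_le_of_norm_le_const hm fun r hr => by
      rw [← dist_eq_norm]; exact hL hr
  rw [hsplit ν hν hfν, hsplit μ hμ hfμ, add_sub_add_comm, ← sub_smul]
  refine (norm_add_le _ _).trans (add_le_add ((norm_sub_le _ _).trans
    (add_le_add (hbound ν hν) (hbound μ hμ))) ?_)
  rw [norm_smul, Real.norm_eq_abs]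

theorem dist_setIntegral_Ioc_le_of_mapsTo_closedBall [CompleteSpace E] {y x : ℝ → E}
    {ν μ : Measure ℝ} [IsLocallyFiniteMeasure ν] [IsLocallyFiniteMeasure μ] {u v : ℝ}
    (huv : u < v) (hy : IntegrableOn y (Ioc u v) ν) (hxν : IntegrableOn x (Ioc u v) ν)
    (hxμ : IntegrableOn x (Ioc u v) μ) {L : E} {ε : ℝ} (hL : MapsTo x (Ioo u v) (closedBall L ε)) :
    dist (∫ r in Ioc u v, y r ∂ν) (∫ r in Ioc u v, x r ∂μ)
      ≤ ‖∫ r in Ioo u v, (y r - x r) ∂ν‖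
        + (ε * ν.real (Ioo u v) + ε * μ.real (Ioo u v)
          + |ν.real (Ioo u v) - μ.real (Ioo u v)| * ‖L‖)
        + dist (ν.real {v} • y v) (μ.real {v} • x v) := by
  rw [setIntegral_Ioc_eq_setIntegral_Ioo_add huv hy, setIntegral_Ioc_eq_setIntegral_Ioo_add huv hxμ]
  refine (dist_add_add_le _ _ _ _).trans (add_le_add_left ?_ _)
  have hsub : ∫ r in Ioo u v, y r ∂ν - ∫ r in Ioo u v, x r ∂μ
      = ∫ r in Ioo u v, (y r - x r) ∂ν
        + (∫ r in Ioo u v, x r ∂ν - ∫ r in Ioo u v, x r ∂μ) := by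
    rw [integral_sub (hy.mono_set Ioo_subset_Ioc_self) (hxν.mono_set Ioo_subset_Ioc_self)]
    abel
  rw [dist_eq_norm, hsub]
  exact (norm_add_le _ _).trans (add_le_add_right
    (norm_setIntegral_sub_setIntegral_le_of_mapsTo_closedBall hL measure_Ioo_lt_top
      measure_Ioo_lt_top (hxν.mono_set Ioo_subset_Ioc_self) (hxμ.mono_set Ioo_subset_Ioc_self)) _)

theorem tendsto_setIntegral_sub_of_tendstoUniformlyOn {ι α : Type*} [MeasurableSpace α]
    {l : Filter ι} {fn : ι → α → E} {f : α → E} {μn : ι → Measure α} {s : Set α} {m : ℝ}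
    (hu : TendstoUniformlyOn fn f l s) (hfin : ∀ i, μn i s < ∞)
    (hμ : Tendsto (fun i => (μn i).real s) l (𝓝 m)) :
    Tendsto (fun i => ∫ r in s, (fn i r - f r) ∂μn i) l (𝓝 0) := by
  refine Metric.tendsto_nhds.2 fun δ hδ => ?_
  have hM : 0 < |m| + 1 := by positivity
  filter_upwards [hμ.eventually_lt_const ((le_abs_self m).trans_lt (lt_add_one _)),
    Metric.tendstoUniformlyOn_iff.1 hu (δ / (|m| + 1)) (div_pos hδ hM)] with i hμi hui
  rw [dist_zero_right]
  calc ‖∫ r in s, (fn i r - f r) ∂μn i‖ ≤ δ / (|m| + 1) * (μn i).real s :=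
        norm_setIntegral_le_of_norm_le_const (hfin i) fun r hr => by
          rw [← dist_eq_norm, dist_comm]; exact (hui r hr).le
    _ < δ / (|m| + 1) * (|m| + 1) := by gcongr
    _ = δ := div_mul_cancel₀ δ hM.ne'

end SetIntegral

section Convergence

variable {E : Type*} [NormedAddCommGroup E] [NormedSpace ℝ E] [CompleteSpace E] {T : ℝ}
  {xn : ℕ → ℝ → E} {x : ℝ → E} {μn : ℕ → Measure ℝ} {μ : Measure ℝ}
  [∀ n, IsLocallyFiniteMeasure (μn n)] [IsLocallyFiniteMeasure μ]

theorem eventually_dist_setIntegral_Ioc_le_of_mapsTo_closedBall (hxn : ∀ n, Cadlag T (xn n))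
    (hx : Cadlag T x) (hxu : TendstoUniformlyOn xn x atTop (Icc 0 T)) {u v : ℝ} (hu : 0 ≤ u)
    (huv : u < v) (hvT : v ≤ T)
    (hIoo : Tendsto (fun n => (μn n).real (Ioo u v)) atTop (𝓝 (μ.real (Ioo u v))))
    (hatom : Tendsto (fun n => (μn n).real {v}) atTop (𝓝 (μ.real {v})))
    {L : E} {ε : ℝ} (hL : MapsTo x (Ioo u v) (closedBall L ε)) :
    ∀ η > 0, ∀ᶠ n in atTop, dist (∫ r in Ioc u v, xn n r ∂μn n) (∫ r in Ioc u v, x r ∂μ)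
      ≤ 2 * ε * μ.real (Ioc u v) + η := by
  have hε : 0 ≤ ε := by
    obtain ⟨r, hr⟩ := exists_between huv
    exact dist_nonneg.trans (hL hr)
  set c : ℕ → ℝ := fun n => ‖∫ r in Ioo u v, (xn n r - x r) ∂μn n‖
    + (ε * (μn n).real (Ioo u v) + ε * μ.real (Ioo u v)
      + |(μn n).real (Ioo u v) - μ.real (Ioo u v)| * ‖L‖)
    + dist ((μn n).real {v} • xn n v) (μ.real {v} • x v)
  have hle : ∀ n, dist (∫ r in Ioc u v, xn n r ∂μn n) (∫ r in Ioc u v, x r ∂μ) ≤ c n := fun n =>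
    dist_setIntegral_Ioc_le_of_mapsTo_closedBall huv ((hxn n).integrableOn_Ioc hu hvT _)
      (hx.integrableOn_Ioc hu hvT _) (hx.integrableOn_Ioc hu hvT _) hL
  have hc : Tendsto c atTop (𝓝 (2 * ε * μ.real (Ioo u v))) := by
    have hunif := tendsto_setIntegral_sub_of_tendstoUniformlyOn
      (hxu.mono fun r hr => ⟨hu.trans hr.1.le, hr.2.le.trans hvT⟩) (fun _ => measure_Ioo_lt_top)
      hIoo
    have hIooDiff : Tendsto (fun n => |(μn n).real (Ioo u v) - μ.real (Ioo u v)|) atTop (𝓝 0) := by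
      simpa using (hIoo.sub_const (μ.real (Ioo u v))).abs
    have hatomDiff := (hatom.smul (hxu.tendsto_at ⟨hu.trans huv.le, hvT⟩)).dist
      (tendsto_const_nhds (x := μ.real {v} • x v))
    convert (hunif.norm.add (((hIoo.const_mul ε).add_const (ε * μ.real (Ioo u v))).add
      (hIooDiff.mul_const ‖L‖))).add hatomDiff using 2
    simp only [norm_zero, dist_self, zero_mul, add_zero, zero_add]
    ring
  intro η hη
  filter_upwards [hc.eventually_lt_const (lt_add_of_pos_right _ hη)] with n hn
  calc _ ≤ c n := hle n
    _ ≤ 2 * ε * μ.real (Ioo u v) + η := hn.le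
    _ ≤ 2 * ε * μ.real (Ioc u v) + η := by
      gcongr 2 * ε * ?_ + η
      exact measureReal_mono Ioo_subset_Ioc_self measure_Ioc_lt_top.ne

theorem tendsto_setIntegral_Ioc_of_tendstoUniformlyOn (hxn : ∀ n, Cadlag T (xn n))
    (hx : Cadlag T x) (hxu : TendstoUniformlyOn xn x atTop (Icc 0 T))
    (hIoo : ∀ u v, 0 ≤ u → u < v → v ≤ T →
      Tendsto (fun n => (μn n).real (Ioo u v)) atTop (𝓝 (μ.real (Ioo u v))))
    (hatom : ∀ v ∈ Ioc 0 T, Tendsto (fun n => (μn n).real {v}) atTop (𝓝 (μ.real {v})))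
    {s t : ℝ} (hs : 0 ≤ s) (hst : s ≤ t) (htT : t ≤ T) :
    Tendsto (fun n => ∫ r in Ioc s t, xn n r ∂μn n) atTop (𝓝 (∫ r in Ioc s t, x r ∂μ)) := by
  have hlimsup : ∀ ε > 0, ∀ η > 0, ∀ᶠ n in atTop,
      dist (∫ r in Ioc s t, xn n r ∂μn n) (∫ r in Ioc s t, x r ∂μ)
        ≤ 2 * ε * μ.real (Ioc s t) + η := by
    intro ε hε
    refine hx.mem_of_forall_step hε hs hst htT (S := {u | ∀ η > 0, ∀ᶠ n in atTop,
      dist (∫ r in Ioc s u, xn n r ∂μn n) (∫ r in Ioc s u, x r ∂μ)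
        ≤ 2 * ε * μ.real (Ioc s u) + η}) (fun η hη => by simp [hη.le]) ?_
    rintro u ⟨hu, hsu, -⟩ v ⟨huv, hvt⟩ L hL η hη
    have hvT := hvt.trans htT
    filter_upwards [hu (η / 2) (half_pos hη),
      eventually_dist_setIntegral_Ioc_le_of_mapsTo_closedBall hxn hx hxu (hs.trans hsu) huv hvT
        (hIoo u v (hs.trans hsu) huv hvT) (hatom v ⟨(hs.trans hsu).trans_lt huv, hvT⟩) hL
        (η / 2) (half_pos hη)] with n h1 h2
    calc _ ≤ _ := dist_setIntegral_Ioc_le_add hsu huv.le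
          ((hxn n).integrableOn_Ioc hs hvT _) (hx.integrableOn_Ioc hs hvT _)
      _ ≤ (2 * ε * μ.real (Ioc s u) + η / 2) + (2 * ε * μ.real (Ioc u v) + η / 2) :=
          add_le_add h1 h2
      _ = 2 * ε * μ.real (Ioc s v) + η := by
          rw [← Ioc_union_Ioc_eq_Ioc hsu huv.le,
            measureReal_union (Ioc_disjoint_Ioc_of_le le_rfl) measurableSet_Ioc
              measure_Ioc_lt_top.ne measure_Ioc_lt_top.ne]
          ring
  refine Metric.tendsto_nhds.2 fun δ hδ => ?_
  set m := μ.real (Ioc s t)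
  have hm : 0 ≤ m := measureReal_nonneg
  filter_upwards [hlimsup (δ / (4 * (m + 1))) (by positivity) (δ / 2) (half_pos hδ)] with n hn
  refine hn.trans_lt ?_
  have : 2 * (δ / (4 * (m + 1))) * m < δ / 2 := by
    rw [mul_comm 2, mul_assoc, div_mul_eq_mul_div, div_lt_div_iff₀ (by positivity) two_pos]
    nlinarith
  linarith

end Convergence

theorem tendsto_leftLim_of_tendstoUniformlyOn {ι : Type*} {l : Filter ι} {fn : ι → ℝ → ℝ}
    {f : ℝ → ℝ} (hfn : ∀ i, Monotone (fn i)) (hf : Monotone f) {a b : ℝ} (hab : a < b)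
    (h : TendstoUniformlyOn fn f l (Ioo a b)) :
    Tendsto (fun i => Function.leftLim (fn i) b) l (𝓝 (Function.leftLim f b)) := by
  refine Metric.tendsto_nhds.2 fun δ hδ => ?_
  filter_upwards [Metric.tendstoUniformlyOn_iff.1 h (δ / 2) (half_pos hδ)] with i hi
  refine lt_of_le_of_lt ?_ (half_lt_self hδ)
  refine le_of_tendsto (((hfn i).tendsto_leftLim b).dist (hf.tendsto_leftLim b)) ?_
  filter_upwards [Ioo_mem_nhdsLT hab] with r hr
  rw [dist_comm]
  exact (hi r hr).le

namespace StieltjesFunction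

theorem measureReal_Ioo (f : StieltjesFunction ℝ) {a b : ℝ} (hab : a < b) :
    f.measure.real (Ioo a b) = Function.leftLim f b - f a := by
  rw [measureReal_def, measure_Ioo, ENNReal.toReal_ofReal (sub_nonneg.2 (f.mono.le_leftLim hab))]

theorem measureReal_singleton_s12 (f : StieltjesFunction ℝ) (a : ℝ) :
    f.measure.real {a} = f a - Function.leftLim f a := by
  rw [measureReal_def, measure_singleton,
    ENNReal.toReal_ofReal (sub_nonneg.2 (f.mono.leftLim_le le_rfl))]

variable {ι : Type*} {l : Filter ι} {kn : ι → StieltjesFunction ℝ} {k : StieltjesFunction ℝ}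
  {a b : ℝ}

theorem tendsto_measureReal_Ioo_of_tendstoUniformlyOn (hab : a < b)
    (h : TendstoUniformlyOn (fun i t => kn i t) (fun t => k t) l (Icc a b)) :
    Tendsto (fun i => (kn i).measure.real (Ioo a b)) l (𝓝 (k.measure.real (Ioo a b))) := by
  simp only [measureReal_Ioo _ hab]
  exact (tendsto_leftLim_of_tendstoUniformlyOn (fun i => (kn i).mono) k.mono hab
    (h.mono Ioo_subset_Icc_self)).sub (h.tendsto_at (left_mem_Icc.2 hab.le))

theorem tendsto_measureReal_singleton_of_tendstoUniformlyOn (hab : a < b)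
    (h : TendstoUniformlyOn (fun i t => kn i t) (fun t => k t) l (Icc a b)) :
    Tendsto (fun i => (kn i).measure.real {b}) l (𝓝 (k.measure.real {b})) := by
  simp only [measureReal_singleton_s12]
  exact (h.tendsto_at (right_mem_Icc.2 hab.le)).sub (tendsto_leftLim_of_tendstoUniformlyOn
    (fun i => (kn i).mono) k.mono hab (h.mono Ioo_subset_Icc_self))

end StieltjesFunction

theorem helly_bray_uniform_uniform_general (T : ℝ)
    (xn : ℕ → ℝ → ℝ) (x : ℝ → ℝ)
    (hxnc : ∀ n, Cadlag T (xn n)) (hxc : Cadlag T x)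
    (hxu : TendstoUniformlyOn xn x atTop (Set.Icc 0 T))
    (kn : ℕ → StieltjesFunction ℝ) (k : StieltjesFunction ℝ)
    (hku : TendstoUniformlyOn (fun n t => kn n t) (fun t => k t) atTop (Set.Icc 0 T)) :
    ∀ s t : ℝ, 0 ≤ s → s ≤ t → t ≤ T →
      Tendsto (fun n => ∫ r in Set.Ioc s t, xn n r ∂(kn n).measure) atTop
        (nhds (∫ r in Set.Ioc s t, x r ∂k.measure)) := by
  intro s t hs hst htT
  refine tendsto_setIntegral_Ioc_of_tendstoUniformlyOn hxnc hxc hxu (fun u v hu huv hvT => ?_)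
    (fun v hv => ?_) hs hst htT
  · exact StieltjesFunction.tendsto_measureReal_Ioo_of_tendstoUniformlyOn huv
      (hku.mono (Icc_subset_Icc hu hvT))
  · exact StieltjesFunction.tendsto_measureReal_singleton_of_tendstoUniformlyOn hv.1
      (hku.mono (Icc_subset_Icc_right hv.2))

/-- Helly–Bray theorem, uniform–uniform version: if the càdlàg functions `xⁿ → x`
uniformly on `[0,T]`, the Stieltjes functions `kⁿ` have uniformly bounded variation on
`[0,T]` and `kⁿ → k` uniformly on `[0,T]`, then `∫_{(s,t]} xⁿ dkⁿ → ∫_{(s,t]} x dk`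
for all `0 ≤ s ≤ t ≤ T`. -/
theorem helly_bray_uniform_uniform (T : ℝ) (hT : 0 < T)
    (xn : ℕ → ℝ → ℝ) (x : ℝ → ℝ)
    (hxnc : ∀ n, Cadlag T (xn n)) (hxc : Cadlag T x)
    (hxu : TendstoUniformlyOn xn x atTop (Set.Icc 0 T))
    (kn : ℕ → StieltjesFunction ℝ) (k : StieltjesFunction ℝ)
    (hbd : ∃ M : ℝ, ∀ n, kn n T - kn n 0 ≤ M)
    (hku : TendstoUniformlyOn (fun n t => kn n t) (fun t => k t) atTop (Set.Icc 0 T)) :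
    ∀ s t : ℝ, 0 ≤ s → s ≤ t → t ≤ T →
      Tendsto (fun n => ∫ r in Set.Ioc s t, xn n r ∂(kn n).measure) atTop
        (nhds (∫ r in Set.Ioc s t, x r ∂k.measure)) :=
  helly_bray_uniform_uniform_general T xn x hxnc hxc hxu kn k hku
end
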